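/- Every extremal class C of VC dimension d admits a labeled sample compression scheme of size d: there exist a compression map taking each sample s of C (a restriction of a concept of C to a subset of the domain) to a labeled subsample of s of size at most d, and a reconstruction map taking each such subsample to a concept of C, such that the reconstructed concept is always consistent with the original sample. -/

import Mathlib

/-!
Compress a sample `(Y, c|Y)` to the dimension set `D` of a cube of maximum dimension containing
`c|Y` in the restricted class `C|Y`, which is again extremal, and reconstruct from `(D, c|D)` any
concept of `C` lying in a cube with dimension set `D` and agreeing with `c` on `D`.

Consistency on `Y` rests on one fact about an extremal class: if `u` and `v ≠ u` agree on `D` and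
both lie in cubes with dimension set `D`, then `u` lies in a cube of dimension `|D| + 1`. It is
proved by induction on the Hamming distance from `u` to `v`, passing to the subclass fixing the
coordinates off `D` where `u` and `v` agree, which is again extremal by counting shattered and
strongly shattered sets across cuts along single coordinates.
-/

variable {n : ℕ}

/-- `S` is shattered by the concept class `C`. -/
def Shatters (C : Set (Fin n → Bool)) (S : Finset (Fin n)) : Prop :=
  ∀ f : Fin n → Bool, ∃ c ∈ C, ∀ x ∈ S, c x = f x

/-- `B` is a cube of `C` with dimension set `S`. -/
def IsCube (C B : Set (Fin n → Bool)) (S : Finset (Fin n)) : Prop :=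
  B ⊆ C ∧ (∀ b ∈ B, ∀ b' ∈ B, ∀ x, x ∉ S → b x = b' x) ∧
    (∀ f : Fin n → Bool, ∃ b ∈ B, ∀ x ∈ S, b x = f x)

/-- `S` is strongly shattered by `C`. -/
def StronglyShatters (C : Set (Fin n → Bool)) (S : Finset (Fin n)) : Prop :=
  ∃ B, IsCube C B S

/-- `C` is extremal: every shattered set is strongly shattered. -/
def Extremal (C : Set (Fin n → Bool)) : Prop :=
  ∀ S, Shatters C S → StronglyShatters C S

/-- The restriction of a concept to `S` (coordinates outside `S` set to `false`). -/
def restrictF (c : Fin n → Bool) (S : Finset (Fin n)) : Fin n → Bool :=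
  fun x => if x ∈ S then c x else false


open Finset hiding Shatters

section

variable {C C' B : Set (Fin n → Bool)} {S D Y : Finset (Fin n)} {y : Fin n}

open Classical in
noncomputable def shatteredSets (C : Set (Fin n → Bool)) : Finset (Finset (Fin n)) :=
  {S | Shatters C S}

open Classical in
noncomputable def stronglyShatteredSets (C : Set (Fin n → Bool)) : Finset (Finset (Fin n)) :=
  {S | StronglyShatters C S}

def LiesInCube (C : Set (Fin n → Bool)) (D : Finset (Fin n)) (u : Fin n → Bool) : Prop :=
  ∃ B, IsCube C B D ∧ u ∈ B

@[simp]
lemma mem_shatteredSets : S ∈ shatteredSets C ↔ Shatters C S := by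
  classical simp [shatteredSets]

@[simp]
lemma mem_stronglyShatteredSets : S ∈ stronglyShatteredSets C ↔ StronglyShatters C S := by
  classical simp [stronglyShatteredSets]

lemma Shatters.mono (hS : Shatters C S) (h : C ⊆ C') : Shatters C' S := fun f =>
  let ⟨c, hc, hcf⟩ := hS f
  ⟨c, h hc, hcf⟩

lemma IsCube.of_subset (h : IsCube C B S) (hB : B ⊆ C') : IsCube C' B S := ⟨hB, h.2⟩

lemma IsCube.shatters (h : IsCube C B S) : Shatters C S := fun f =>
  let ⟨b, hb, hbf⟩ := h.2.2 f
  ⟨b, h.1 hb, hbf⟩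

lemma StronglyShatters.shatters : StronglyShatters C S → Shatters C S
  | ⟨_, hB⟩ => hB.shatters

lemma LiesInCube.stronglyShatters {u : Fin n → Bool} :
    LiesInCube C D u → StronglyShatters C D
  | ⟨B, hB, _⟩ => ⟨B, hB⟩

lemma LiesInCube.mem {u : Fin n → Bool} : LiesInCube C D u → u ∈ C
  | ⟨_, hB, huB⟩ => hB.1 huB

lemma StronglyShatters.exists_liesInCube_eqOn (h : StronglyShatters C D) (g : Fin n → Bool) :
    ∃ u, LiesInCube C D u ∧ ∀ x ∈ D, u x = g x :=
  let ⟨B, hB⟩ := h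
  let ⟨u, hu, hug⟩ := hB.2.2 g
  ⟨u, ⟨B, hB, hu⟩, hug⟩

lemma liesInCube_empty {u : Fin n → Bool} (hu : u ∈ C) : LiesInCube C ∅ u :=
  ⟨{u}, ⟨Set.singleton_subset_iff.2 hu, by simp, fun _ => ⟨u, rfl, by simp⟩⟩, rfl⟩

lemma IsCube.slice (h : IsCube C B S) (hy : y ∈ S) (v : Bool) :
    IsCube C {b ∈ B | b y = v} (S.erase y) := by
  classical
  refine ⟨fun b hb => h.1 hb.1, fun b hb b' hb' x hx => ?_, fun f => ?_⟩
  · by_cases hxy : x = y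
    · rw [hxy, hb.2, hb'.2]
    · exact h.2.1 b hb.1 b' hb'.1 x fun hxS => hx (mem_erase.2 ⟨hxy, hxS⟩)
  · obtain ⟨b, hb, hbf⟩ := h.2.2 (Function.update f y v)
    refine ⟨b, ⟨hb, by simpa using hbf y hy⟩, fun x hx => ?_⟩
    simpa [ne_of_mem_erase hx] using hbf x (mem_of_mem_erase hx)

lemma IsCube.shatters_insert {B₁ B₂ : Set (Fin n → Bool)} {b₁ b₂ : Fin n → Bool} {x : Fin n}
    (h₁ : IsCube C B₁ D) (h₂ : IsCube C B₂ D) (hb₁ : b₁ ∈ B₁) (hb₂ : b₂ ∈ B₂)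
    (hxD : x ∉ D) (hx : b₁ x ≠ b₂ x) : Shatters C (insert x D) := by
  intro f
  have extend : ∀ B b, IsCube C B D → b ∈ B → b x = f x →
      ∃ c ∈ C, ∀ z ∈ insert x D, c z = f z := by
    intro B b hB hb hbf
    obtain ⟨c, hc, hcf⟩ := hB.2.2 f
    exact ⟨c, hB.1 hc, forall_mem_insert _ _ _ |>.2 ⟨(hB.2.1 c hc b hb x hxD).trans hbf, hcf⟩⟩
  by_cases hf : b₁ x = f x
  · exact extend B₁ b₁ h₁ hb₁ hf
  · refine extend B₂ b₂ h₂ hb₂ ?_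
    revert hx hf
    cases b₁ x <;> cases b₂ x <;> cases f x <;> decide

lemma Shatters.notMem_of_sep_eq {b : Bool} (h : Shatters {c ∈ C | c y = b} S) : y ∉ S := by
  intro hy
  obtain ⟨c, hc, hcf⟩ := h fun _ => !b
  simpa [hc.2] using hcf y hy

lemma shatters_insert_of_forall_sep_eq (h : ∀ b, Shatters {c ∈ C | c y = b} S) :
    Shatters C (insert y S) := fun f =>
  let ⟨c, hc, hcf⟩ := h (f y) f
  ⟨c, hc.1, forall_mem_insert _ _ _ |>.2 ⟨hc.2, hcf⟩⟩

lemma StronglyShatters.exists_sep_eq (h : StronglyShatters C S) (hy : y ∉ S) :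
    ∃ b, StronglyShatters {c ∈ C | c y = b} S := by
  obtain ⟨B, hB⟩ := h
  obtain ⟨b, hb, -⟩ := hB.2.2 fun _ => false
  exact ⟨b y, B, hB.of_subset fun b' hb' => show b' ∈ C ∧ b' y = b y from
    ⟨hB.1 hb', hB.2.1 b' hb' b hb y hy⟩⟩

lemma StronglyShatters.sep_eq_erase (h : StronglyShatters C S) (hy : y ∈ S) (v : Bool) :
    StronglyShatters {c ∈ C | c y = v} (S.erase y) := by
  obtain ⟨B, hB⟩ := h
  exact ⟨_, (hB.slice hy v).of_subset fun b hb => ⟨hB.1 hb.1, hb.2⟩⟩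

lemma stronglyShatteredSets_subset_shatteredSets :
    stronglyShatteredSets C ⊆ shatteredSets C := fun S hS => by
  simpa using (mem_stronglyShatteredSets.1 hS).shatters

lemma extremal_iff_card_shatteredSets_le :
    Extremal C ↔ #(shatteredSets C) ≤ #(stronglyShatteredSets C) := by
  refine ⟨fun hC => card_le_card fun S hS => ?_, fun h S hS => ?_⟩
  · simpa using hC S (mem_shatteredSets.1 hS)
  · rw [← mem_stronglyShatteredSets,
      eq_of_subset_of_card_le stronglyShatteredSets_subset_shatteredSets h]
    simpa using hS

/-- A set shattered by a half of `C` cut along `y` avoids `y`; if it is shattered by both halves,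
`insert y S` is shattered by `C`. -/
lemma card_shatteredSets_sep_add_le (C : Set (Fin n → Bool)) (y : Fin n) :
    #(shatteredSets {c ∈ C | c y = false}) + #(shatteredSets {c ∈ C | c y = true}) ≤
      #(shatteredSets C) := by
  classical
  set T₀ := shatteredSets {c ∈ C | c y = false}
  set T₁ := shatteredSets {c ∈ C | c y = true}
  have hT₀ : ∀ S ∈ T₀, y ∉ S := fun S hS => (mem_shatteredSets.1 hS).notMem_of_sep_eq
  have hT₁ : ∀ S ∈ T₁, y ∉ S := fun S hS => (mem_shatteredSets.1 hS).notMem_of_sep_eq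
  calc #T₀ + #T₁ = #(T₀ ∩ T₁) + #(T₀ ∪ T₁) := by
        rw [add_comm (#(T₀ ∩ T₁)), card_union_add_card_inter]
    _ ≤ #{S ∈ shatteredSets C | y ∈ S} + #{S ∈ shatteredSets C | y ∉ S} := by
      refine add_le_add ?_ (card_le_card ?_)
      · refine card_le_card_of_injOn (insert y) (fun S hS => ?_) fun S hS S' hS' hSS' => ?_
        · obtain ⟨h₀, h₁⟩ := mem_inter.1 hS
          refine mem_filter.2 ⟨mem_shatteredSets.2 ?_, mem_insert_self y S⟩
          exact shatters_insert_of_forall_sep_eq <| Bool.forall_bool.2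
            ⟨mem_shatteredSets.1 h₀, mem_shatteredSets.1 h₁⟩
        · simpa [erase_insert (hT₀ S (mem_inter.1 hS).1), erase_insert (hT₀ S' (mem_inter.1 hS').1)]
            using congrArg (·.erase y) hSS'
      · intro S hS
        refine mem_filter.2 ⟨mem_shatteredSets.2 ?_, ?_⟩
        · rcases mem_union.1 hS with h | h <;>
            exact (mem_shatteredSets.1 h).mono (Set.sep_subset _ _)
        · rcases mem_union.1 hS with h | h
          exacts [hT₀ S h, hT₁ S h]
    _ = #(shatteredSets C) := card_filter_add_card_filter_not _

lemma card_stronglyShatteredSets_le_sep_add (C : Set (Fin n → Bool)) (y : Fin n) :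
    #(stronglyShatteredSets C) ≤ #(stronglyShatteredSets {c ∈ C | c y = false}) +
      #(stronglyShatteredSets {c ∈ C | c y = true}) := by
  classical
  set T₀ := stronglyShatteredSets {c ∈ C | c y = false}
  set T₁ := stronglyShatteredSets {c ∈ C | c y = true}
  calc #(stronglyShatteredSets C)
      = #{S ∈ stronglyShatteredSets C | y ∈ S} + #{S ∈ stronglyShatteredSets C | y ∉ S} :=
        (card_filter_add_card_filter_not _).symm
    _ ≤ #(T₀ ∩ T₁) + #(T₀ ∪ T₁) := by
      refine add_le_add ?_ (card_le_card ?_)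
      · refine card_le_card_of_injOn (fun S : Finset (Fin n) => S.erase y) (fun S hS => ?_)
          fun S hS S' hS' => erase_injOn' y (mem_filter.1 hS).2 (mem_filter.1 hS').2
        obtain ⟨hS, hy⟩ := mem_filter.1 hS
        have hS := mem_stronglyShatteredSets.1 hS
        exact mem_inter.2 ⟨mem_stronglyShatteredSets.2 (hS.sep_eq_erase hy _),
          mem_stronglyShatteredSets.2 (hS.sep_eq_erase hy _)⟩
      · intro S hS
        obtain ⟨hS, hy⟩ := mem_filter.1 hS
        obtain ⟨b, hb⟩ := (mem_stronglyShatteredSets.1 hS).exists_sep_eq hy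
        cases b
        exacts [mem_union_left _ (mem_stronglyShatteredSets.2 hb),
          mem_union_right _ (mem_stronglyShatteredSets.2 hb)]
    _ = #T₀ + #T₁ := by rw [add_comm, card_union_add_card_inter]

/-- Cutting `C` along `y` can only lose shattered sets and gain strongly shattered ones, while
every strongly shattered set is shattered; so if `C` has as many of each, so do both halves. -/
lemma Extremal.sep_eq (hC : Extremal C) (y : Fin n) (b : Bool) :
    Extremal {c ∈ C | c y = b} := by
  rw [extremal_iff_card_shatteredSets_le] at hC ⊢
  have h₀ := card_le_card (stronglyShatteredSets_subset_shatteredSets (C := {c ∈ C | c y = false}))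
  have h₁ := card_le_card (stronglyShatteredSets_subset_shatteredSets (C := {c ∈ C | c y = true}))
  have := card_shatteredSets_sep_add_le C y
  have := card_stronglyShatteredSets_le_sep_add C y
  cases b <;> omega

lemma Extremal.sep_forall_eq (hC : Extremal C) (t : Fin n → Bool) (W : Finset (Fin n)) :
    Extremal {c ∈ C | ∀ z ∈ W, c z = t z} := by
  classical
  induction W using Finset.induction_on with
  | empty => simpa using hC
  | insert a W _ ih =>
    convert ih.sep_eq a (t a) using 1
    ext c
    simp only [Set.mem_ofPred_eq, forall_mem_insert]
    tauto

/-- Restrict to the subclass `C'` fixing the coordinates off `D` where `u` and `v` agree: `C'` is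
extremal and shatters `insert x D` for any `x` with `u x ≠ v x`, so `u` extends to a cube of `C'`
with dimension set `insert x D`. Its other point `w` agreeing with `u` on `insert x D`, if not `u`
itself, is strictly closer to `u` than `v` was, so we recurse on `w`. -/
theorem Extremal.exists_liesInCube_insert {C : Set (Fin n → Bool)} {D : Finset (Fin n)}
    {u v : Fin n → Bool} (hC : Extremal C)
    (hu : LiesInCube C D u) (hv : LiesInCube C D v) (huv : ∀ x ∈ D, u x = v x) (hne : u ≠ v) :
    ∃ x ∉ D, LiesInCube C (insert x D) u := by
  classical
  obtain ⟨B₁, hB₁, huB₁⟩ := hu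
  obtain ⟨B₂, hB₂, hvB₂⟩ := hv
  obtain ⟨x, hx⟩ := Function.ne_iff.1 hne
  have hxD : x ∉ D := fun h => hx (huv x h)
  set W : Finset (Fin n) := {z | z ∉ D ∧ u z = v z}
  set C' := {c ∈ C | ∀ z ∈ W, c z = u z}
  have hC' : Extremal C' := hC.sep_forall_eq u W
  have hB₁C' : B₁ ⊆ C' := fun b hb =>
    ⟨hB₁.1 hb, fun z hz => hB₁.2.1 b hb u huB₁ z (mem_filter.1 hz).2.1⟩
  have hB₂C' : B₂ ⊆ C' := fun b hb =>
    ⟨hB₂.1 hb, fun z hz => (hB₂.2.1 b hb v hvB₂ z (mem_filter.1 hz).2.1).trans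
      (mem_filter.1 hz).2.2.symm⟩
  obtain ⟨B, hB⟩ := hC' _ <|
    (hB₁.of_subset hB₁C').shatters_insert (hB₂.of_subset hB₂C') huB₁ hvB₂ hxD hx
  have hBC : B ⊆ C := hB.1.trans (Set.sep_subset _ _)
  obtain ⟨w, hw, hwu⟩ := hB.2.2 u
  by_cases hwu' : w = u
  · exact ⟨x, hxD, B, hB.of_subset hBC, hwu' ▸ hw⟩
  have hdist : hammingDist u w < hammingDist u v := by
    refine card_lt_card <| (ssubset_iff_of_subset fun z hz => ?_).2 ⟨x, by simpa using hx, ?_⟩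
    · rw [mem_filter] at hz ⊢
      refine ⟨mem_univ z, fun huvz => hz.2 ?_⟩
      by_cases hzD : z ∈ D
      · exact (hwu z (mem_insert_of_mem hzD)).symm
      · exact ((hB.1 hw).2 z (by simp [W, hzD, huvz])).symm
    · simpa using (hwu x (mem_insert_self x D)).symm
  have hslice : IsCube C' {b ∈ B | b x = u x} D := by
    simpa [erase_insert hxD] using hB.slice (mem_insert_self x D) (u x)
  obtain ⟨x', hx'D, B', hB', huB'⟩ := hC'.exists_liesInCube_insert ⟨B₁, hB₁.of_subset hB₁C', huB₁⟩
    ⟨_, hslice, hw, hwu x (mem_insert_self x D)⟩ (fun z hz => (hwu z (mem_insert_of_mem hz)).symm)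
    (Ne.symm hwu')
  exact ⟨x', hx'D, B', hB'.of_subset (hB'.1.trans (Set.sep_subset _ _)), huB'⟩
termination_by hammingDist u v

lemma Extremal.eq_of_maximalFor_liesInCube {u v : Fin n → Bool} (hC : Extremal C)
    (hu : MaximalFor (LiesInCube C · u) card D) (hv : LiesInCube C D v)
    (huv : ∀ x ∈ D, u x = v x) : u = v := by
  by_contra hne
  obtain ⟨x, hxD, hx⟩ := hC.exists_liesInCube_insert hu.1 hv huv hne
  have := hu.2 hx (card_le_card (subset_insert x D))
  rw [card_insert_of_notMem hxD] at this
  omega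

lemma exists_maximalFor_liesInCube {u : Fin n → Bool} (hu : u ∈ C) :
    ∃ D, MaximalFor (LiesInCube C · u) card D :=
  Set.toFinite {D | LiesInCube C D u} |>.exists_maximalFor card _ ⟨∅, liesInCube_empty hu⟩

lemma restrictF_of_mem {c : Fin n → Bool} {x : Fin n} (hx : x ∈ Y) : restrictF c Y x = c x :=
  if_pos hx

lemma restrictF_of_notMem {c : Fin n → Bool} {x : Fin n} (hx : x ∉ Y) :
    restrictF c Y x = false :=
  if_neg hx

lemma LiesInCube.image_restrictF {u : Fin n → Bool} (h : LiesInCube C D u) (hDY : D ⊆ Y) :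
    LiesInCube ((restrictF · Y) '' C) D (restrictF u Y) := by
  obtain ⟨B, hB, huB⟩ := h
  refine ⟨(restrictF · Y) '' B, ⟨Set.image_mono hB.1, ?_, fun f => ?_⟩, Set.mem_image_of_mem _ huB⟩
  · rintro _ ⟨b, hb, rfl⟩ _ ⟨b', hb', rfl⟩ x hx
    by_cases hxY : x ∈ Y
    · simpa [restrictF_of_mem hxY] using hB.2.1 b hb b' hb' x hx
    · simp [restrictF_of_notMem hxY]
  · obtain ⟨b, hb, hbf⟩ := hB.2.2 f
    exact ⟨restrictF b Y, Set.mem_image_of_mem _ hb, fun x hx => by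
      rw [restrictF_of_mem (hDY hx), hbf x hx]⟩

lemma Shatters.subset_of_image_restrictF (h : Shatters ((restrictF · Y) '' C) S) : S ⊆ Y := by
  intro x hx
  by_contra hxY
  obtain ⟨_, ⟨c, -, rfl⟩, hcf⟩ := h fun _ => true
  simpa [restrictF_of_notMem hxY] using hcf x hx

lemma Shatters.of_image_restrictF (h : Shatters ((restrictF · Y) '' C) S) : Shatters C S := by
  intro f
  obtain ⟨_, ⟨c, hc, rfl⟩, hcf⟩ := h f
  exact ⟨c, hc, fun x hx => by
    simpa [restrictF_of_mem (h.subset_of_image_restrictF hx)] using hcf x hx⟩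

lemma Extremal.image_restrictF (hC : Extremal C) (Y : Finset (Fin n)) :
    Extremal ((restrictF · Y) '' C) := by
  intro S hS
  obtain ⟨B, hB⟩ := hC S hS.of_image_restrictF
  obtain ⟨b, hb, -⟩ := hB.2.2 fun _ => false
  exact (LiesInCube.image_restrictF ⟨B, hB, hb⟩ hS.subset_of_image_restrictF).stronglyShatters

end

/-- Every extremal class of VC dimension at most `d` has a proper labeled sample
compression scheme of size `d`: the compression map `κ` sends a sample
`(Y, c|Y)` to a subset `D ⊆ Y` of size at most `d` (representing the labeled
subsample `(D, c|D)`), and the reconstruction map `ρ` sends a labeled subsample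
to a concept of `C` consistent with the original sample. -/
theorem extremal_labeled_compression (n d : ℕ) (C : Set (Fin n → Bool))
    (hC : Extremal C) (hd : ∀ S : Finset (Fin n), Shatters C S → S.card ≤ d) :
    ∃ κ : Finset (Fin n) → (Fin n → Bool) → Finset (Fin n),
    ∃ ρ : Finset (Fin n) → (Fin n → Bool) → (Fin n → Bool),
    ∀ Y : Finset (Fin n), ∀ c ∈ C,
      κ Y (restrictF c Y) ⊆ Y ∧
      (κ Y (restrictF c Y)).card ≤ d ∧
      ρ (κ Y (restrictF c Y)) (restrictF c (κ Y (restrictF c Y))) ∈ C ∧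
      ∀ x ∈ Y, ρ (κ Y (restrictF c Y)) (restrictF c (κ Y (restrictF c Y))) x = c x := by
  choose! κ hκ using fun Y g (hg : g ∈ (restrictF · Y) '' C) => exists_maximalFor_liesInCube hg
  choose! ρ hρ using fun D g (hD : StronglyShatters C D) => hD.exists_liesInCube_eqOn g
  refine ⟨κ, ρ, fun Y c hc => ?_⟩
  set D := κ Y (restrictF c Y)
  have hmax : MaximalFor (LiesInCube ((restrictF · Y) '' C) · (restrictF c Y)) card D :=
    hκ Y _ ⟨c, hc, rfl⟩
  have hDY : D ⊆ Y := hmax.1.stronglyShatters.shatters.subset_of_image_restrictF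
  have hDsh : Shatters C D := hmax.1.stronglyShatters.shatters.of_image_restrictF
  obtain ⟨hρC, hρc⟩ := hρ D (restrictF c D) (hC D hDsh)
  have heq : restrictF c Y = restrictF (ρ D (restrictF c D)) Y :=
    (hC.image_restrictF Y).eq_of_maximalFor_liesInCube hmax (hρC.image_restrictF hDY)
      fun x hx => by rw [restrictF_of_mem (hDY hx), restrictF_of_mem (hDY hx), hρc x hx,
        restrictF_of_mem hx]
  refine ⟨hDY, hd D hDsh, hρC.mem, fun x hx => ?_⟩
  simpa [restrictF_of_mem hx] using (congrFun heq x).symm
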